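/- arXiv:1605.07086 — 2 statements merged into one kernel-verified Lean document; each statement's English description precedes it below -/
import Mathlib

section
/- For any β ∈ [0,1], a ≥ 0, z ∈ ℝ^d with |z| ≤ 1, and u ∈ 𝒮(ℝ^d), one has ∫_{|x|≥a}|u(x+z) − u(x) − z·∇u(x)| dx ≤ 2^{1−β} (∫_{|x|≥(a−1)∨0}|∇u(x)| dx)^{1−β} (∫_{|x|≥(a−1)∨0}|D²u(x)| dx)^{β} |z|^{1+β}. -/
/-!
With `R x = u (x + z) - u x - ⟪z, ∇u x⟫`, the fundamental theorem of calculus along the segment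
`[x, x + z]` gives the two pointwise bounds
`|R x| ≤ |z| (∫₀¹ |∇u (x + t z)| dt + |∇u x|)` and `|R x| ≤ |z|² ∫₀¹ |D²u (x + t z)| dt`.
Integrate over `|x| ≥ a` and exchange the order of integration: for `t ∈ [0, 1]` the translate
`x + t z` stays in `|y| ≥ (a - 1) ∨ 0`, so `∫ |R| ≤ 2 |z| ∫ |∇u|` and `∫ |R| ≤ |z|² ∫ |D²u|` over
the respective regions. The claim is the interpolation `A ≤ X ^ (1 - β) * Y ^ β` of two upper
bounds `A ≤ X`, `A ≤ Y`.
-/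

open MeasureTheory
open scoped ENNReal RealInnerProductSpace

noncomputable section

abbrev Rd (d : ℕ) := EuclideanSpace ℝ (Fin d)

open Set

section Translation

variable {G : Type*} [AddGroup G] [MeasurableSpace G] [MeasurableAdd G]
  {μ : Measure G} [μ.IsAddRightInvariant]

theorem setLIntegral_comp_add_right_le {S T : Set G} {w : G} (hST : ∀ x ∈ S, x + w ∈ T)
    (g : G → ℝ≥0∞) : ∫⁻ x in S, g (x + w) ∂μ ≤ ∫⁻ x in T, g x ∂μ := by
  rw [(measurePreserving_add_right μ w).setLIntegral_comp_emb (measurableEmbedding_addRight w)]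
  exact lintegral_mono_set (image_subset_iff.2 hST)

end Translation

section Segment

variable {E : Type*} [NormedAddCommGroup E] [NormedSpace ℝ E] [MeasurableSpace E] [BorelSpace E]
  [SecondCountableTopology E] {μ : Measure E} [μ.IsAddRightInvariant] [SFinite μ]

theorem setLIntegral_lintegral_segment_le {g : E → ℝ≥0∞} (hg : Measurable g) {S T : Set E}
    {z : E} (hST : ∀ t ∈ Icc (0 : ℝ) 1, ∀ x ∈ S, x + t • z ∈ T) :
    ∫⁻ x in S, (∫⁻ t in Ioc (0 : ℝ) 1, g (x + t • z)) ∂μ ≤ ∫⁻ x in T, g x ∂μ := by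
  have hmeas : Measurable (Function.uncurry fun (x : E) (t : ℝ) => g (x + t • z)) :=
    hg.comp (by fun_prop)
  rw [lintegral_lintegral_swap hmeas.aemeasurable]
  calc ∫⁻ t in Ioc (0 : ℝ) 1, ∫⁻ x in S, g (x + t • z) ∂μ
      ≤ ∫⁻ _ in Ioc (0 : ℝ) 1, ∫⁻ x in T, g x ∂μ :=
        setLIntegral_mono' measurableSet_Ioc fun t ht =>
          setLIntegral_comp_add_right_le (hST t (Ioc_subset_Icc_self ht)) g
    _ = ∫⁻ x in T, g x ∂μ := by simp

end Segment

section Taylor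

variable {E F : Type*} [NormedAddCommGroup E] [NormedSpace ℝ E]
  [NormedAddCommGroup F] [NormedSpace ℝ F] [CompleteSpace F]
  {f : E → F} {f' : E → E →L[ℝ] F}

theorem enorm_sub_le_lintegral_segment (hf : ∀ y, HasFDerivAt f (f' y) y) (hf' : Continuous f')
    (x z : E) {t : ℝ} (ht : t ∈ Icc (0 : ℝ) 1) :
    ‖f (x + t • z) - f x‖ₑ ≤ (∫⁻ s in Ioc (0 : ℝ) 1, ‖f' (x + s • z)‖ₑ) * ‖z‖ₑ := by
  have hderiv : ∀ s : ℝ, HasDerivAt (fun r : ℝ => f (x + r • z)) (f' (x + s • z) z) s := fun s =>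
    (hf _).comp_hasDerivAt s (((hasDerivAt_id s).smul_const z).const_add x |>.congr_deriv
      (one_smul ℝ z))
  have hftc : f (x + t • z) - f x = ∫ s in (0 : ℝ)..t, f' (x + s • z) z := by
    rw [intervalIntegral.integral_eq_sub_of_hasDerivAt (fun s _ => hderiv s)
      ((by fun_prop : Continuous fun s : ℝ => f' (x + s • z) z).intervalIntegrable 0 t)]
    simp
  calc ‖f (x + t • z) - f x‖ₑ
      ≤ ∫⁻ s in Ioc (0 : ℝ) t, ‖f' (x + s • z) z‖ₑ := by
        rw [hftc, intervalIntegral.integral_of_le ht.1]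
        exact enorm_integral_le_lintegral_enorm _
    _ ≤ ∫⁻ s in Ioc (0 : ℝ) 1, ‖f' (x + s • z)‖ₑ * ‖z‖ₑ :=
        lintegral_mono' (Measure.restrict_mono (Ioc_subset_Ioc_right ht.2) le_rfl)
          fun s => (f' _).le_opENorm z
    _ = (∫⁻ s in Ioc (0 : ℝ) 1, ‖f' (x + s • z)‖ₑ) * ‖z‖ₑ :=
        lintegral_mul_const' _ _ enorm_ne_top

theorem enorm_remainder_le_fderiv (hf : ∀ y, HasFDerivAt f (f' y) y) (hf' : Continuous f')
    (x z : E) :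
    ‖f (x + z) - f x - f' x z‖ₑ ≤
      ((∫⁻ s in Ioc (0 : ℝ) 1, ‖f' (x + s • z)‖ₑ) + ‖f' x‖ₑ) * ‖z‖ₑ := by
  have hsegment := enorm_sub_le_lintegral_segment hf hf' x z (t := 1) ⟨zero_le_one, le_rfl⟩
  rw [one_smul] at hsegment
  calc ‖f (x + z) - f x - f' x z‖ₑ ≤ ‖f (x + z) - f x‖ₑ + ‖f' x z‖ₑ := enorm_sub_le
    _ ≤ (∫⁻ s in Ioc (0 : ℝ) 1, ‖f' (x + s • z)‖ₑ) * ‖z‖ₑ + ‖f' x‖ₑ * ‖z‖ₑ :=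
        add_le_add hsegment ((f' x).le_opENorm z)
    _ = _ := (add_mul _ _ _).symm

theorem enorm_remainder_le_fderiv_fderiv (hf : ∀ y, HasFDerivAt f (f' y) y) (hf' : Continuous f')
    {f'' : E → E →L[ℝ] E →L[ℝ] F} (hf'' : ∀ y, HasFDerivAt f' (f'' y) y)
    (hf''c : Continuous f'') (x z : E) :
    ‖f (x + z) - f x - f' x z‖ₑ ≤ (∫⁻ s in Ioc (0 : ℝ) 1, ‖f'' (x + s • z)‖ₑ) * ‖z‖ₑ ^ 2 := by
  -- The remainder is the increment of `y ↦ f y - f' x y`, whose derivative `f' y - f' x`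
  -- is in turn controlled by `f''`.
  have hremainder := enorm_sub_le_lintegral_segment (f := fun y => f y - f' x y)
    (fun y => (hf y).sub (f' x).hasFDerivAt) (hf'.sub continuous_const) x z (t := 1)
    ⟨zero_le_one, le_rfl⟩
  have hincrement : ∀ s ∈ Ioc (0 : ℝ) 1, ‖f' (x + s • z) - f' x‖ₑ ≤
      (∫⁻ r in Ioc (0 : ℝ) 1, ‖f'' (x + r • z)‖ₑ) * ‖z‖ₑ := fun s hs =>
    enorm_sub_le_lintegral_segment hf'' hf''c x z (Ioc_subset_Icc_self hs)
  calc ‖f (x + z) - f x - f' x z‖ₑ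
      ≤ (∫⁻ s in Ioc (0 : ℝ) 1, ‖f' (x + s • z) - f' x‖ₑ) * ‖z‖ₑ := by
        convert hremainder using 2
        simp only [one_smul, map_add]
        abel
    _ ≤ (∫⁻ _ in Ioc (0 : ℝ) 1, (∫⁻ r in Ioc (0 : ℝ) 1, ‖f'' (x + r • z)‖ₑ) * ‖z‖ₑ) * ‖z‖ₑ := by
        gcongr ?_ * _
        exact setLIntegral_mono' measurableSet_Ioc hincrement
    _ = (∫⁻ s in Ioc (0 : ℝ) 1, ‖f'' (x + s • z)‖ₑ) * ‖z‖ₑ ^ 2 := by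
        simp only [setLIntegral_const, Real.volume_Ioc, sub_zero, ENNReal.ofReal_one, mul_one]
        ring

end Taylor

section IntegratedRemainder

variable {E F : Type*} [NormedAddCommGroup E] [NormedSpace ℝ E] [MeasurableSpace E]
  [BorelSpace E] [SecondCountableTopology E] {μ : Measure E} [μ.IsAddRightInvariant] [SFinite μ]
  [NormedAddCommGroup F] [NormedSpace ℝ F] [CompleteSpace F]
  {f : E → F} {f' : E → E →L[ℝ] F} {S T : Set E} {z : E}

theorem setLIntegral_enorm_remainder_le_fderiv (hf : ∀ y, HasFDerivAt f (f' y) y)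
    (hf' : Continuous f') (hST : ∀ t ∈ Icc (0 : ℝ) 1, ∀ x ∈ S, x + t • z ∈ T) :
    ∫⁻ x in S, ‖f (x + z) - f x - f' x z‖ₑ ∂μ ≤ 2 * ‖z‖ₑ * ∫⁻ x in T, ‖f' x‖ₑ ∂μ := by
  have hmeas : Measurable fun y => ‖f' y‖ₑ := by fun_prop
  have hST₀ : S ⊆ T := fun x hx => by simpa using hST 0 ⟨le_rfl, zero_le_one⟩ x hx
  calc ∫⁻ x in S, ‖f (x + z) - f x - f' x z‖ₑ ∂μ
      ≤ ∫⁻ x in S, ((∫⁻ s in Ioc (0 : ℝ) 1, ‖f' (x + s • z)‖ₑ) + ‖f' x‖ₑ) * ‖z‖ₑ ∂μ :=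
        lintegral_mono fun x => enorm_remainder_le_fderiv hf hf' x z
    _ = ((∫⁻ x in S, (∫⁻ s in Ioc (0 : ℝ) 1, ‖f' (x + s • z)‖ₑ) ∂μ)
          + ∫⁻ x in S, ‖f' x‖ₑ ∂μ) * ‖z‖ₑ := by
        rw [lintegral_mul_const' _ _ enorm_ne_top, lintegral_add_right _ hmeas]
    _ ≤ ((∫⁻ x in T, ‖f' x‖ₑ ∂μ) + ∫⁻ x in T, ‖f' x‖ₑ ∂μ) * ‖z‖ₑ := by
        gcongr ?_ * _
        exact add_le_add (setLIntegral_lintegral_segment_le hmeas hST) (lintegral_mono_set hST₀)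
    _ = 2 * ‖z‖ₑ * ∫⁻ x in T, ‖f' x‖ₑ ∂μ := by ring

theorem setLIntegral_enorm_remainder_le_fderiv_fderiv (hf : ∀ y, HasFDerivAt f (f' y) y)
    (hf' : Continuous f') {f'' : E → E →L[ℝ] E →L[ℝ] F} (hf'' : ∀ y, HasFDerivAt f' (f'' y) y)
    (hf''c : Continuous f'') (hST : ∀ t ∈ Icc (0 : ℝ) 1, ∀ x ∈ S, x + t • z ∈ T) :
    ∫⁻ x in S, ‖f (x + z) - f x - f' x z‖ₑ ∂μ ≤ ‖z‖ₑ ^ 2 * ∫⁻ x in T, ‖f'' x‖ₑ ∂μ := by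
  have hmeas : Measurable fun y => ‖f'' y‖ₑ := by fun_prop
  calc ∫⁻ x in S, ‖f (x + z) - f x - f' x z‖ₑ ∂μ
      ≤ ∫⁻ x in S, (∫⁻ s in Ioc (0 : ℝ) 1, ‖f'' (x + s • z)‖ₑ) * ‖z‖ₑ ^ 2 ∂μ :=
        lintegral_mono fun x => enorm_remainder_le_fderiv_fderiv hf hf' hf'' hf''c x z
    _ = (∫⁻ x in S, (∫⁻ s in Ioc (0 : ℝ) 1, ‖f'' (x + s • z)‖ₑ) ∂μ) * ‖z‖ₑ ^ 2 :=
        lintegral_mul_const' _ _ (by finiteness)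
    _ ≤ ‖z‖ₑ ^ 2 * ∫⁻ x in T, ‖f'' x‖ₑ ∂μ := by
        rw [mul_comm]
        gcongr _ * ?_
        exact setLIntegral_lintegral_segment_le hmeas hST

end IntegratedRemainder

theorem integral_norm_le_toReal_mul_of_lintegral_le {α P Q : Type*} [MeasurableSpace α]
    {μ ν : Measure α} [NormedAddCommGroup P] [NormedAddCommGroup Q] {f : α → P} {g : α → Q}
    (hf : AEStronglyMeasurable f μ) (hg : Integrable g ν) {c : ℝ≥0∞} (hc : c ≠ ∞)
    (h : ∫⁻ x, ‖f x‖ₑ ∂μ ≤ c * ∫⁻ x, ‖g x‖ₑ ∂ν) :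
    ∫ x, ‖f x‖ ∂μ ≤ c.toReal * ∫ x, ‖g x‖ ∂ν := by
  rw [integral_norm_eq_lintegral_enorm hf, integral_norm_eq_lintegral_enorm hg.1,
    ← ENNReal.toReal_mul]
  exact ENNReal.toReal_mono (ENNReal.mul_ne_top hc hg.2.ne) h

theorem le_rpow_mul_rpow_of_le_of_le {A X Y β : ℝ} (hA : 0 ≤ A) (hX : A ≤ X) (hY : A ≤ Y)
    (hβ : β ∈ Icc (0 : ℝ) 1) : A ≤ X ^ (1 - β) * Y ^ β := by
  calc A = A ^ (1 - β) * A ^ β := by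
        rw [← Real.rpow_add' hA (by norm_num), sub_add_cancel, Real.rpow_one]
    _ ≤ X ^ (1 - β) * Y ^ β :=
        mul_le_mul (Real.rpow_le_rpow hA hX (sub_nonneg.2 hβ.2)) (Real.rpow_le_rpow hA hY hβ.1)
          (by positivity) (Real.rpow_nonneg (hA.trans hX) _)

theorem max_sub_one_zero_le_norm_add {E : Type*} [SeminormedAddCommGroup E] {a : ℝ} {x w : E}
    (hx : a ≤ ‖x‖) (hw : ‖w‖ ≤ 1) : max (a - 1) 0 ≤ ‖x + w‖ :=
  max_le (by linarith [norm_sub_le_norm_add x w]) (norm_nonneg _)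

namespace SchwartzMap

variable {E F : Type*} [NormedAddCommGroup E] [NormedSpace ℝ E]
  [NormedAddCommGroup F] [NormedSpace ℝ F]

theorem continuous_remainder (u : SchwartzMap E F) (z : E) :
    Continuous fun x => u (x + z) - u x - fderiv ℝ u x z :=
  ((u.continuous.comp (continuous_add_const z)).sub u.continuous).sub
    ((fderivCLM ℝ E F u).continuous.clm_apply continuous_const)

variable [MeasurableSpace E] [BorelSpace E] [SecondCountableTopology E] {μ : Measure E}
  [μ.IsAddRightInvariant] [SFinite μ] [μ.HasTemperateGrowth] [CompleteSpace F]
  {S T : Set E} {z : E}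

theorem integral_norm_remainder_le_fderiv (u : SchwartzMap E F)
    (hST : ∀ t ∈ Icc (0 : ℝ) 1, ∀ x ∈ S, x + t • z ∈ T) :
    ∫ x in S, ‖u (x + z) - u x - fderiv ℝ u x z‖ ∂μ ≤ 2 * ‖z‖ * ∫ x in T, ‖fderiv ℝ u x‖ ∂μ := by
  have h := integral_norm_le_toReal_mul_of_lintegral_le
    (u.continuous_remainder z).aestronglyMeasurable.restrict
    ((fderivCLM ℝ E F u).integrable (μ := μ)).integrableOn (by finiteness)
    (setLIntegral_enorm_remainder_le_fderiv u.hasFDerivAt (fderivCLM ℝ E F u).continuous hST)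
  rwa [ENNReal.toReal_mul, ENNReal.toReal_ofNat, toReal_enorm] at h

theorem integral_norm_remainder_le_fderiv_fderiv (u : SchwartzMap E F)
    (hST : ∀ t ∈ Icc (0 : ℝ) 1, ∀ x ∈ S, x + t • z ∈ T) :
    ∫ x in S, ‖u (x + z) - u x - fderiv ℝ u x z‖ ∂μ ≤
      ‖z‖ ^ 2 * ∫ x in T, ‖fderiv ℝ (fderiv ℝ u) x‖ ∂μ := by
  set u' := fderivCLM ℝ E F u
  set u'' := fderivCLM ℝ E (E →L[ℝ] F) u'
  have h := integral_norm_le_toReal_mul_of_lintegral_le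
    (u.continuous_remainder z).aestronglyMeasurable.restrict
    (u''.integrable (μ := μ)).integrableOn (by finiteness)
    (setLIntegral_enorm_remainder_le_fderiv_fderiv u.hasFDerivAt u'.continuous u'.hasFDerivAt
      u''.continuous hST)
  rwa [ENNReal.toReal_pow, toReal_enorm] at h

end SchwartzMap

theorem norm_gradient_eq_norm_fderiv {F : Type*} [NormedAddCommGroup F] [InnerProductSpace ℝ F]
    [CompleteSpace F] (f : F → ℝ) (x : F) : ‖gradient f x‖ = ‖fderiv ℝ f x‖ := by
  rw [gradient, LinearIsometryEquiv.norm_map]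

theorem rpow_interpolation_eq {c G H β : ℝ} (hc : 0 ≤ c) (hG : 0 ≤ G) (hH : 0 ≤ H) (hβ : 0 ≤ β) :
    (2 * c * G) ^ (1 - β) * (c ^ 2 * H) ^ β = 2 ^ (1 - β) * G ^ (1 - β) * H ^ β * c ^ (1 + β) := by
  rw [Real.mul_rpow (by positivity) hG, Real.mul_rpow zero_le_two hc,
    Real.mul_rpow (by positivity) hH, ← Real.rpow_natCast_mul hc]
  have hc_pow : c ^ (1 - β) * c ^ ((2 : ℕ) * β) = c ^ (1 + β) := by
    rw [← Real.rpow_add' hc (by push_cast; linarith)]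
    congr 1
    push_cast
    ring
  rw [← hc_pow]
  ring

theorem statement_6_general (d : ℕ) (β a : ℝ) (hβ : β ∈ Set.Icc (0:ℝ) 1)
    (z : Rd d) (hz : ‖z‖ ≤ 1) (u : SchwartzMap (Rd d) ℝ) :
    (∫ x in {x : Rd d | a ≤ ‖x‖}, |u (x + z) - u x - ⟪z, gradient (⇑u) x⟫|)
      ≤ 2 ^ (1 - β)
        * (∫ x in {x : Rd d | max (a - 1) 0 ≤ ‖x‖}, ‖gradient (⇑u) x‖) ^ (1 - β)
        * (∫ x in {x : Rd d | max (a - 1) 0 ≤ ‖x‖}, ‖iteratedFDeriv ℝ 2 (⇑u) x‖) ^ β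
        * ‖z‖ ^ (1 + β) := by
  have hST : ∀ t ∈ Icc (0 : ℝ) 1, ∀ x ∈ {x : Rd d | a ≤ ‖x‖},
      x + t • z ∈ {x : Rd d | max (a - 1) 0 ≤ ‖x‖} := fun t ht x hx =>
    max_sub_one_zero_le_norm_add hx <| by
      rw [norm_smul, Real.norm_of_nonneg ht.1]
      exact mul_le_one₀ ht.2 (norm_nonneg z) hz
  have hD2 (x : Rd d) : ‖iteratedFDeriv ℝ 2 u x‖ = ‖fderiv ℝ (fderiv ℝ u) x‖ := by
    rw [← norm_iteratedFDeriv_fderiv (n := 1), norm_iteratedFDeriv_one]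
  simp only [inner_gradient_right, norm_gradient_eq_norm_fderiv, ← Real.norm_eq_abs, hD2]
  calc _ ≤ (2 * ‖z‖ * ∫ x in {x : Rd d | max (a - 1) 0 ≤ ‖x‖}, ‖fderiv ℝ u x‖) ^ (1 - β)
        * (‖z‖ ^ 2 * ∫ x in {x : Rd d | max (a - 1) 0 ≤ ‖x‖}, ‖fderiv ℝ (fderiv ℝ u) x‖) ^ β :=
        le_rpow_mul_rpow_of_le_of_le (integral_nonneg fun _ => norm_nonneg _)
          (u.integral_norm_remainder_le_fderiv hST)
          (u.integral_norm_remainder_le_fderiv_fderiv hST) hβ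
    _ = _ := rpow_interpolation_eq (norm_nonneg z) (integral_nonneg fun _ => norm_nonneg _)
        (integral_nonneg fun _ => by positivity) hβ.1

/-- for `β ∈ [0,1]`, `a ≥ 0`, `|z| ≤ 1` and Schwartz `u`,
`∫_{|x|≥a}|u(x+z) − u(x) − z·∇u(x)| dx
  ≤ 2^{1−β} (∫_{|x|≥(a−1)∨0}|∇u|)^{1−β} (∫_{|x|≥(a−1)∨0}|D²u|)^β |z|^{1+β}`. -/
theorem statement_6 (d : ℕ) (β a : ℝ) (hβ : β ∈ Set.Icc (0:ℝ) 1) (ha : 0 ≤ a)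
    (z : Rd d) (hz : ‖z‖ ≤ 1) (u : SchwartzMap (Rd d) ℝ) :
    (∫ x in {x : Rd d | a ≤ ‖x‖}, |u (x + z) - u x - ⟪z, gradient (⇑u) x⟫|)
      ≤ 2 ^ (1 - β)
        * (∫ x in {x : Rd d | max (a - 1) 0 ≤ ‖x‖}, ‖gradient (⇑u) x‖) ^ (1 - β)
        * (∫ x in {x : Rd d | max (a - 1) 0 ≤ ‖x‖}, ‖iteratedFDeriv ℝ 2 (⇑u) x‖) ^ β
        * ‖z‖ ^ (1 + β) :=
  statement_6_general d β a hβ z hz u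
end
end

section
/- Let σ ∈ (0,2), π ∈ 𝔄^σ, and let κ be a scaling function with scaling factor l. Assume both: (a) there is N₂ > 0 such that for every R > 0, ∫(|y|∧1)π̃_R(dy) ≤ N₂ if σ ∈ (0,1), ∫(|y|²∧1)π̃_R(dy) ≤ N₂ if σ = 1, and ∫_{|y|≤1}|y|²π̃_R(dy) + ∫_{|y|>1}|y|π̃_R(dy) ≤ N₂ if σ ∈ (1,2); and (b) there is n₁ > 0 with ∫_{|y|≤1}|ξ·y|²π̃_R(dy) ≥ n₁ for all R > 0 and all unit vectors ξ. Then there is a constant c = c(n₁,N₂,l) > 0 such that for all ξ ∈ ℝ^d: c|ψ^π(ξ)| ≤ |Re ψ^π(ξ)| ≤ |ψ^π(ξ)| and |Im ψ^π(ξ)| ≤ c^{−1}|Re ψ^π(ξ)|. -/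
open MeasureTheory Filter
open scoped ENNReal RealInnerProductSpace

noncomputable section

variable {d : ℕ}

/-- The truncation function `χ_σ`. -/
def chiSigma (σ : ℝ) (y : Rd d) : ℝ :=
  if σ < 1 then 0 else if σ = 1 then (if ‖y‖ ≤ 1 then 1 else 0) else 1

/-- Membership in the class `𝔄^σ`. -/
def MemA (σ : ℝ) (ν : Measure (Rd d)) : Prop :=
  ν {0} = 0 ∧
  (∫⁻ y, ENNReal.ofReal (min (‖y‖ ^ 2) 1) ∂ν) < ∞ ∧
  σ = sInf {α : ℝ | α < 2 ∧ (∫⁻ y in {y : Rd d | ‖y‖ ≤ 1}, ENNReal.ofReal (‖y‖ ^ α) ∂ν) < ∞} ∧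
  (1 < σ → (∫⁻ y in {y : Rd d | 1 < ‖y‖}, ENNReal.ofReal ‖y‖ ∂ν) < ∞) ∧
  (σ = 1 → ∀ R R' : ℝ, 0 < R → R < R' →
    (∫ y in {y : Rd d | R < ‖y‖ ∧ ‖y‖ ≤ R'}, y ∂ν) = 0)

/-- The symbol `ψ^π`. -/
def symb (σ : ℝ) (ν : Measure (Rd d)) (ξ : Rd d) : ℂ :=
  ∫ y, (Complex.exp (Complex.I * ((2 * Real.pi * ⟪ξ, y⟫ : ℝ) : ℂ))
        - 1 - Complex.I * ((2 * Real.pi * chiSigma σ y * ⟪ξ, y⟫ : ℝ) : ℂ)) ∂ν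

/-- The rescaled measure `π̃_R = κ(R) π_R`. -/
def scaledM (κ : ℝ → ℝ) (ν : Measure (Rd d)) (R : ℝ) : Measure (Rd d) :=
  ENNReal.ofReal (κ R) • ν.map (fun y => R⁻¹ • y)

/-- `κ` is a scaling function with scaling factor `l`. -/
structure ScalingPair (κ l : ℝ → ℝ) : Prop where
  pos : ∀ r > 0, 0 < κ r
  cont : ContinuousOn κ (Set.Ioi 0)
  zero : Tendsto κ (nhdsWithin 0 (Set.Ioi 0)) (nhds 0)
  top : Tendsto κ atTop atTop
  l_mono : MonotoneOn l (Set.Ioi 0)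
  l_cont : ContinuousOn l (Set.Ioi 0)
  l_zero : Tendsto l (nhdsWithin 0 (Set.Ioi 0)) (nhds 0)
  scale : ∀ ε > 0, ∀ r > 0, κ (ε * r) ≤ l ε * κ r

/-!
Fix `ξ ≠ 0` and put `R = 1 / (2|ξ|)`, so that `|2π ξ·y| ≤ π |y/R|`. The real part of `ψ(ξ)` is
`-∫ (1 - cos 2π ξ·y) ν(dy)`; on `{|y| ≤ R}` the bound `u² ≤ 1 - cos (π u)` for `|u| ≤ 1` turns
(b) into `κ(R) |Re ψ(ξ)| ≥ n₁`. The imaginary part is `∫ (sin 2π ξ·y - 2π χ_σ(y) ξ·y) ν(dy)`,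
whose integrand is at most `π²` times the weight of (a) evaluated at `y/R`; for `σ = 1` the
truncation radius must first be moved from `1` to `R`, which the vanishing of `∫ y ν(dy)` over
annuli allows. Hence `κ(R) |Im ψ(ξ)| ≤ π² N₂`, so `|Im ψ| ≤ (π² N₂ / n₁) |Re ψ|`, and the
remaining inequalities follow from `|ψ| ≤ |Re ψ| + |Im ψ|`.
-/

open Real

section Trigonometric

lemma sq_le_one_sub_cos_pi_mul {u : ℝ} (hu : |u| ≤ 1) : u ^ 2 ≤ 1 - cos (π * u) := by
  have hπu : |π * u| ≤ π := by
    rw [abs_mul, abs_of_pos pi_pos]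
    nlinarith [pi_pos]
  have h := cos_le_one_sub_mul_cos_sq hπu
  have : 2 / π ^ 2 * (π * u) ^ 2 = 2 * u ^ 2 := by field_simp
  nlinarith [sq_nonneg u]

variable {t x : ℝ}

lemma abs_sin_le_pi_sq_mul_min (ht : |t| ≤ π * x) : |sin t| ≤ π ^ 2 * min x 1 := by
  have hx : 0 ≤ x := nonneg_of_mul_nonneg_right ((abs_nonneg t).trans ht) pi_pos
  rcases le_total x 1 with h | h
  · rw [min_eq_left h]
    have : π * x ≤ π ^ 2 * x := by
      nlinarith [mul_nonneg (by nlinarith [pi_gt_three] : (0:ℝ) ≤ π ^ 2 - π) hx]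
    linarith [abs_sin_le_abs (x := t)]
  · rw [min_eq_right h]
    nlinarith [abs_sin_le_one t, pi_gt_three]

lemma abs_sin_sub_self_le_pi_sq_mul_sq (ht : |t| ≤ π * x) (hx : x ≤ 1) :
    |sin t - t| ≤ π ^ 2 * x ^ 2 := by
  have hx0 : 0 ≤ x := nonneg_of_mul_nonneg_right ((abs_nonneg t).trans ht) pi_pos
  have hcube : |t| ^ 3 ≤ (π * x) ^ 2 * π := by
    calc |t| ^ 3 ≤ (π * x) ^ 3 := pow_le_pow_left₀ (abs_nonneg t) ht 3
      _ = (π * x) ^ 2 * (π * x) := by ring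
      _ ≤ (π * x) ^ 2 * π := by gcongr; nlinarith [pi_pos]
  rw [abs_sub_comm]
  nlinarith [abs_sub_sin_le t, pi_lt_four, sq_nonneg (π * x)]

lemma abs_sin_sub_ite_le (ht : |t| ≤ π * x) :
    |sin t - (if x ≤ 1 then t else 0)| ≤ π ^ 2 * min (x ^ 2) 1 := by
  split_ifs with h
  · have hx0 : 0 ≤ x := nonneg_of_mul_nonneg_right ((abs_nonneg t).trans ht) pi_pos
    rw [min_eq_left (pow_le_one₀ hx0 h)]
    exact abs_sin_sub_self_le_pi_sq_mul_sq ht h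
  · rw [min_eq_right (one_le_pow₀ (le_of_not_ge h)), sub_zero]
    nlinarith [abs_sin_le_one t, pi_gt_three]

lemma abs_sin_sub_self_le (ht : |t| ≤ π * x) :
    |sin t - t| ≤ π ^ 2 * (if x ≤ 1 then x ^ 2 else x) := by
  split_ifs with h
  · exact abs_sin_sub_self_le_pi_sq_mul_sq ht h
  · have h1 : 1 < x := lt_of_not_ge h
    calc |sin t - t| ≤ |sin t| + |t| := abs_sub _ _
      _ ≤ 1 + π * x := add_le_add (abs_sin_le_one t) ht
      _ ≤ π ^ 2 * x := by
        have hπ : (0:ℝ) < π ^ 2 - π := by nlinarith [pi_gt_three]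
        nlinarith [pi_gt_three, mul_pos hπ (sub_pos.2 h1)]

end Trigonometric

section Symbol

variable {σ R : ℝ} {ν : Measure (Rd d)} {ξ : Rd d}

lemma abs_two_pi_inner_le (hR : 0 < R) (hξR : 2 * ‖ξ‖ * R ≤ 1) (y : Rd d) :
    |2 * π * ⟪ξ, y⟫| ≤ π * ‖R⁻¹ • y‖ := by
  rw [abs_mul, abs_of_pos two_pi_pos, norm_smul, norm_inv, norm_of_nonneg hR.le]
  have hξ : 2 * ‖ξ‖ ≤ R⁻¹ := by
    rw [← mul_one R⁻¹, le_inv_mul_iff₀ hR]; linarith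
  calc 2 * π * |⟪ξ, y⟫| ≤ 2 * π * (‖ξ‖ * ‖y‖) := by gcongr; exact abs_real_inner_le_norm ξ y
    _ = π * (2 * ‖ξ‖ * ‖y‖) := by ring
    _ ≤ π * (R⁻¹ * ‖y‖) := by gcongr

lemma norm_inv_smul_le_one_iff (hR : 0 < R) (y : Rd d) : ‖R⁻¹ • y‖ ≤ 1 ↔ ‖y‖ ≤ R := by
  rw [norm_smul, norm_inv, norm_of_nonneg hR.le, inv_mul_le_iff₀ hR, mul_one]

def levyIntegrand (σ : ℝ) (ξ y : Rd d) : ℂ :=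
  Complex.exp (Complex.I * ((2 * π * ⟪ξ, y⟫ : ℝ) : ℂ))
    - 1 - Complex.I * ((2 * π * chiSigma σ y * ⟪ξ, y⟫ : ℝ) : ℂ)

lemma symb_eq_integral : symb σ ν ξ = ∫ y, levyIntegrand σ ξ y ∂ν := rfl

@[simp]
lemma levyIntegrand_re (y : Rd d) :
    (levyIntegrand σ ξ y).re = cos (2 * π * ⟪ξ, y⟫) - 1 := by
  simp [levyIntegrand, Complex.exp_re]

@[simp]
lemma levyIntegrand_im (y : Rd d) :
    (levyIntegrand σ ξ y).im = sin (2 * π * ⟪ξ, y⟫) - 2 * π * chiSigma σ y * ⟪ξ, y⟫ := by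
  simp [levyIntegrand, Complex.exp_im]

lemma symb_zero : symb σ ν 0 = 0 := by
  simp [symb]

end Symbol

section ScaledMeasure

variable {κ : ℝ → ℝ} {ν : Measure (Rd d)} {R : ℝ}

lemma lintegral_scaledM {f : Rd d → ℝ≥0∞} (hf : Measurable f) :
    ∫⁻ y, f y ∂scaledM κ ν R = ENNReal.ofReal (κ R) * ∫⁻ y, f (R⁻¹ • y) ∂ν := by
  rw [scaledM, lintegral_smul_measure, lintegral_map hf (measurable_const_smul _), smul_eq_mul]

variable {g w : Rd d → ℝ} {C N : ℝ}

lemma ofReal_mul_lintegral_abs_le_of_abs_le_scaled (hw : Measurable fun y => ENNReal.ofReal (w y))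
    (hC : 0 ≤ C) (hgw : ∀ y, |g y| ≤ C * w (R⁻¹ • y))
    (hN : ∫⁻ y, ENNReal.ofReal (w y) ∂scaledM κ ν R ≤ ENNReal.ofReal N) :
    ENNReal.ofReal (κ R) * ∫⁻ y, ENNReal.ofReal |g y| ∂ν
      ≤ ENNReal.ofReal C * ENNReal.ofReal N := by
  calc ENNReal.ofReal (κ R) * ∫⁻ y, ENNReal.ofReal |g y| ∂ν
      ≤ ENNReal.ofReal (κ R) * ∫⁻ y, ENNReal.ofReal C * ENNReal.ofReal (w (R⁻¹ • y)) ∂ν := by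
        gcongr with y
        rw [← ENNReal.ofReal_mul hC]
        exact ENNReal.ofReal_le_ofReal (hgw y)
    _ = ENNReal.ofReal C * ∫⁻ y, ENNReal.ofReal (w y) ∂scaledM κ ν R := by
        rw [lintegral_const_mul' _ _ ENNReal.ofReal_ne_top, lintegral_scaledM hw]
        ring
    _ ≤ ENNReal.ofReal C * ENNReal.ofReal N := by gcongr

lemma integrable_of_abs_le_scaled (hg : AEStronglyMeasurable g ν)
    (hw : Measurable fun y => ENNReal.ofReal (w y)) (hC : 0 ≤ C)
    (hgw : ∀ y, |g y| ≤ C * w (R⁻¹ • y)) (hκ : ENNReal.ofReal (κ R) ≠ 0)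
    (hN : ∫⁻ y, ENNReal.ofReal (w y) ∂scaledM κ ν R ≤ ENNReal.ofReal N) :
    Integrable g ν := by
  have h := ofReal_mul_lintegral_abs_le_of_abs_le_scaled hw hC hgw hN
  refine ⟨hg, ?_⟩
  simp only [HasFiniteIntegral, enorm_eq_ofReal_abs]
  exact ENNReal.lt_top_of_mul_ne_top_right (ne_top_of_le_ne_top (by finiteness) h) hκ

lemma ofReal_mul_abs_integral_le_of_abs_le_scaled
    (hw : Measurable fun y => ENNReal.ofReal (w y)) (hC : 0 ≤ C)
    (hgw : ∀ y, |g y| ≤ C * w (R⁻¹ • y))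
    (hN : ∫⁻ y, ENNReal.ofReal (w y) ∂scaledM κ ν R ≤ ENNReal.ofReal N) :
    ENNReal.ofReal (κ R) * ENNReal.ofReal |∫ y, g y ∂ν|
      ≤ ENNReal.ofReal C * ENNReal.ofReal N := by
  refine le_trans ?_ (ofReal_mul_lintegral_abs_le_of_abs_le_scaled hw hC hgw hN)
  gcongr
  simpa only [enorm_eq_ofReal_abs] using enorm_integral_le_lintegral_enorm g

end ScaledMeasure

section RealPart

variable {σ R : ℝ} {κ : ℝ → ℝ} {ν : Measure (Rd d)} {ξ : Rd d}

lemma integrable_min_norm_sq_one (hν2 : ∫⁻ y, ENNReal.ofReal (min (‖y‖ ^ 2) 1) ∂ν < ∞) :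
    Integrable (fun y : Rd d => min (‖y‖ ^ 2) 1) ν :=
  ⟨by fun_prop, (hasFiniteIntegral_iff_ofReal (ae_of_all _ fun y => by positivity)).2 hν2⟩

lemma integrable_one_sub_cos (hν2 : ∫⁻ y, ENNReal.ofReal (min (‖y‖ ^ 2) 1) ∂ν < ∞)
    (ξ : Rd d) : Integrable (fun y => 1 - cos (2 * π * ⟪ξ, y⟫)) ν := by
  refine ((integrable_min_norm_sq_one hν2).const_mul (2 * π ^ 2 * ‖ξ‖ ^ 2 + 2)).mono'
    (by fun_prop) (ae_of_all _ fun y => ?_)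
  set t := 2 * π * ⟪ξ, y⟫
  have ht : t ^ 2 ≤ 4 * π ^ 2 * ‖ξ‖ ^ 2 * ‖y‖ ^ 2 := by
    calc t ^ 2 = 4 * π ^ 2 * |⟪ξ, y⟫| ^ 2 := by rw [sq_abs]; ring
      _ ≤ 4 * π ^ 2 * (‖ξ‖ * ‖y‖) ^ 2 := by gcongr; exact abs_real_inner_le_norm ξ y
      _ = 4 * π ^ 2 * ‖ξ‖ ^ 2 * ‖y‖ ^ 2 := by ring
  have h1 : 1 - cos t ≤ t ^ 2 / 2 := by linarith [one_sub_sq_div_two_le_cos (x := t)]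
  rw [norm_of_nonneg (sub_nonneg.2 (cos_le_one t))]
  rcases le_total ‖y‖ 1 with hy | hy
  · rw [min_eq_left (pow_le_one₀ (norm_nonneg y) hy)]
    nlinarith [sq_nonneg ‖y‖]
  · rw [min_eq_right (one_le_pow₀ hy)]
    nlinarith [neg_one_le_cos t, sq_nonneg ‖ξ‖, pi_pos]

lemma integrable_levyIntegrand (hν2 : ∫⁻ y, ENNReal.ofReal (min (‖y‖ ^ 2) 1) ∂ν < ∞)
    (him : Integrable (fun y => (levyIntegrand σ ξ y).im) ν) :
    Integrable (levyIntegrand σ ξ) ν :=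
  Integrable.re_im_iff.1
    ⟨(integrable_one_sub_cos hν2 ξ).neg.congr (ae_of_all _ fun y => by simp), him⟩

lemma symb_re (hint : Integrable (levyIntegrand σ ξ) ν) :
    (symb σ ν ξ).re = -∫ y, (1 - cos (2 * π * ⟪ξ, y⟫)) ∂ν := by
  rw [symb_eq_integral, ← RCLike.re_to_complex, ← integral_re hint, ← integral_neg]
  simp

lemma symb_im (hint : Integrable (levyIntegrand σ ξ) ν) :
    (symb σ ν ξ).im = ∫ y, (levyIntegrand σ ξ y).im ∂ν := by
  rw [symb_eq_integral, ← RCLike.im_to_complex, ← integral_im hint]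
  rfl

lemma ofReal_abs_symb_re (hint : Integrable (levyIntegrand σ ξ) ν) :
    ENNReal.ofReal |(symb σ ν ξ).re| = ∫⁻ y, ENNReal.ofReal (1 - cos (2 * π * ⟪ξ, y⟫)) ∂ν := by
  have hcos : Integrable (fun y => 1 - cos (2 * π * ⟪ξ, y⟫)) ν :=
    (Integrable.re_im_iff.2 hint).1.neg.congr (ae_of_all _ fun y => by simp)
  have hnonneg : ∀ y : Rd d, 0 ≤ 1 - cos (2 * π * ⟪ξ, y⟫) := fun y => sub_nonneg.2 (cos_le_one _)
  rw [symb_re hint, abs_neg, abs_of_nonneg (integral_nonneg hnonneg),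
    ofReal_integral_eq_lintegral_ofReal hcos (ae_of_all _ hnonneg)]

lemma setLIntegral_inner_sq_scaledM_le (hξR : 2 * ‖ξ‖ * R = 1) :
    ∫⁻ y in {y : Rd d | ‖y‖ ≤ 1}, ENNReal.ofReal (⟪‖ξ‖⁻¹ • ξ, y⟫ ^ 2) ∂scaledM κ ν R
      ≤ ENNReal.ofReal (κ R) * ∫⁻ y, ENNReal.ofReal (1 - cos (2 * π * ⟪ξ, y⟫)) ∂ν := by
  have hξ : ξ ≠ 0 := by rintro rfl; simp at hξR
  have hRinv : R⁻¹ = 2 * ‖ξ‖ := by rw [inv_eq_of_mul_eq_one_left hξR]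
  have hS : MeasurableSet {y : Rd d | ‖y‖ ≤ 1} := measurableSet_le (by fun_prop) (by fun_prop)
  rw [← lintegral_indicator hS, lintegral_scaledM ((by fun_prop : Measurable _).indicator hS)]
  gcongr with y
  by_cases hy : ‖R⁻¹ • y‖ ≤ 1
  · rw [Set.indicator_of_mem (show R⁻¹ • y ∈ {y : Rd d | ‖y‖ ≤ 1} from hy)]
    have hu : π * ⟪‖ξ‖⁻¹ • ξ, R⁻¹ • y⟫ = 2 * π * ⟪ξ, y⟫ := by
      rw [real_inner_smul_left, real_inner_smul_right, hRinv]
      field_simp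
    have hu1 : |⟪‖ξ‖⁻¹ • ξ, R⁻¹ • y⟫| ≤ 1 := by
      refine (abs_real_inner_le_norm _ _).trans ?_
      rw [norm_smul, norm_inv, norm_norm, inv_mul_cancel₀ (norm_ne_zero_iff.2 hξ), one_mul]
      exact hy
    rw [← hu]
    exact ENNReal.ofReal_le_ofReal (sq_le_one_sub_cos_pi_mul hu1)
  · rw [Set.indicator_of_notMem (show R⁻¹ • y ∉ {y : Rd d | ‖y‖ ≤ 1} from hy)]
    exact zero_le

end RealPart

section ImaginaryPart

variable {σ R N : ℝ} {κ : ℝ → ℝ} {ν : Measure (Rd d)} {ξ : Rd d}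

lemma integrable_levyIntegrand_and_im_symb_le_of_lt_one (hσ : σ < 1)
    (hν2 : ∫⁻ y, ENNReal.ofReal (min (‖y‖ ^ 2) 1) ∂ν < ∞) (hR : 0 < R)
    (hξR : 2 * ‖ξ‖ * R ≤ 1) (hκ : ENNReal.ofReal (κ R) ≠ 0)
    (hN : ∫⁻ y, ENNReal.ofReal (min ‖y‖ 1) ∂scaledM κ ν R ≤ ENNReal.ofReal N) :
    Integrable (levyIntegrand σ ξ) ν ∧
      ENNReal.ofReal (κ R) * ENNReal.ofReal |(symb σ ν ξ).im|
        ≤ ENNReal.ofReal (π ^ 2) * ENNReal.ofReal N := by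
  have him : (fun y => (levyIntegrand σ ξ y).im) = fun y => sin (2 * π * ⟪ξ, y⟫) := by
    ext y
    simp [chiSigma, hσ]
  have hw : Measurable fun y : Rd d => ENNReal.ofReal (min ‖y‖ 1) := by fun_prop
  have hbound (y : Rd d) : |sin (2 * π * ⟪ξ, y⟫)| ≤ π ^ 2 * min ‖R⁻¹ • y‖ 1 :=
    abs_sin_le_pi_sq_mul_min (abs_two_pi_inner_le hR hξR y)
  have hint : Integrable (levyIntegrand σ ξ) ν := integrable_levyIntegrand hν2 <| by
    rw [him]
    exact integrable_of_abs_le_scaled (by fun_prop) hw (by positivity) hbound hκ hN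
  refine ⟨hint, ?_⟩
  rw [symb_im hint, him]
  exact ofReal_mul_abs_integral_le_of_abs_le_scaled hw (by positivity) hbound hN

lemma lintegral_ofReal_ite_norm_le_one (μ : Measure (Rd d)) :
    ∫⁻ y, ENNReal.ofReal (if ‖y‖ ≤ 1 then ‖y‖ ^ 2 else ‖y‖) ∂μ
      = ∫⁻ y in {y : Rd d | ‖y‖ ≤ 1}, ENNReal.ofReal (‖y‖ ^ 2) ∂μ
        + ∫⁻ y in {y : Rd d | 1 < ‖y‖}, ENNReal.ofReal ‖y‖ ∂μ := by
  have hS : MeasurableSet {y : Rd d | ‖y‖ ≤ 1} := measurableSet_le (by fun_prop) (by fun_prop)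
  have hSc : {y : Rd d | ‖y‖ ≤ 1}ᶜ = {y : Rd d | 1 < ‖y‖} := by
    ext y
    simp
  rw [← lintegral_add_compl _ hS, hSc]
  congr 1
  · exact setLIntegral_congr_fun hS fun y (hy : ‖y‖ ≤ 1) => by rw [if_pos hy]
  · exact setLIntegral_congr_fun (hSc ▸ hS.compl) fun y (hy : 1 < ‖y‖) => by
      rw [if_neg hy.not_ge]

lemma integrable_levyIntegrand_and_im_symb_le_of_one_lt (hσ : 1 < σ)
    (hν2 : ∫⁻ y, ENNReal.ofReal (min (‖y‖ ^ 2) 1) ∂ν < ∞) (hR : 0 < R)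
    (hξR : 2 * ‖ξ‖ * R ≤ 1) (hκ : ENNReal.ofReal (κ R) ≠ 0)
    (hN : (∫⁻ y in {y : Rd d | ‖y‖ ≤ 1}, ENNReal.ofReal (‖y‖ ^ 2) ∂scaledM κ ν R)
        + (∫⁻ y in {y : Rd d | 1 < ‖y‖}, ENNReal.ofReal ‖y‖ ∂scaledM κ ν R)
        ≤ ENNReal.ofReal N) :
    Integrable (levyIntegrand σ ξ) ν ∧
      ENNReal.ofReal (κ R) * ENNReal.ofReal |(symb σ ν ξ).im|
        ≤ ENNReal.ofReal (π ^ 2) * ENNReal.ofReal N := by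
  have him : (fun y => (levyIntegrand σ ξ y).im)
      = fun y => sin (2 * π * ⟪ξ, y⟫) - 2 * π * ⟪ξ, y⟫ := by
    ext y
    simp [chiSigma, hσ.not_gt, hσ.ne']
  rw [← lintegral_ofReal_ite_norm_le_one] at hN
  have hw : Measurable fun y : Rd d => ENNReal.ofReal (if ‖y‖ ≤ 1 then ‖y‖ ^ 2 else ‖y‖) :=
    ENNReal.measurable_ofReal.comp <|
      Measurable.ite (measurableSet_le (by fun_prop) (by fun_prop)) (by fun_prop) (by fun_prop)
  have hbound (y : Rd d) : |sin (2 * π * ⟪ξ, y⟫) - 2 * π * ⟪ξ, y⟫|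
      ≤ π ^ 2 * (if ‖R⁻¹ • y‖ ≤ 1 then ‖R⁻¹ • y‖ ^ 2 else ‖R⁻¹ • y‖) :=
    abs_sin_sub_self_le (abs_two_pi_inner_le hR hξR y)
  have hint : Integrable (levyIntegrand σ ξ) ν := integrable_levyIntegrand hν2 <| by
    rw [him]
    exact integrable_of_abs_le_scaled (by fun_prop) hw (by positivity) hbound hκ hN
  refine ⟨hint, ?_⟩
  rw [symb_im hint, him]
  exact ofReal_mul_abs_integral_le_of_abs_le_scaled hw (by positivity) hbound hN

end ImaginaryPart

section CriticalCase

variable {R N : ℝ} {κ : ℝ → ℝ} {ν : Measure (Rd d)} {ξ : Rd d}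

/-- The imaginary part of the Lévy integrand for `σ = 1`, with the truncation radius `1`
replaced by `r`. -/
def sinSubTrunc (ξ : Rd d) (r : ℝ) (y : Rd d) : ℝ :=
  sin (2 * π * ⟪ξ, y⟫) - {y : Rd d | ‖y‖ ≤ r}.indicator (fun y => 2 * π * ⟪ξ, y⟫) y

lemma sinSubTrunc_sub_sinSubTrunc {r s : ℝ} (hrs : r ≤ s) (y : Rd d) :
    sinSubTrunc ξ r y - sinSubTrunc ξ s y
      = {y : Rd d | r < ‖y‖ ∧ ‖y‖ ≤ s}.indicator (fun y => 2 * π * ⟪ξ, y⟫) y := by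
  simp only [sinSubTrunc, Set.indicator_apply, Set.mem_ofPred_eq]
  by_cases hr : ‖y‖ ≤ r
  · simp [hr, hr.trans hrs, hr.not_gt]
  · by_cases hs : ‖y‖ ≤ s <;> simp [hr, hs, lt_of_not_ge hr]

lemma integrable_and_integral_indicator_shell_eq_zero {r s : ℝ}
    (hν2 : ∫⁻ y, ENNReal.ofReal (min (‖y‖ ^ 2) 1) ∂ν < ∞)
    (hsym : ∫ y in {y : Rd d | r < ‖y‖ ∧ ‖y‖ ≤ s}, y ∂ν = 0) (hr : 0 < r) (ξ : Rd d) :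
    Integrable ({y : Rd d | r < ‖y‖ ∧ ‖y‖ ≤ s}.indicator fun y => 2 * π * ⟪ξ, y⟫) ν ∧
      ∫ y, {y : Rd d | r < ‖y‖ ∧ ‖y‖ ≤ s}.indicator (fun y => 2 * π * ⟪ξ, y⟫) y ∂ν = 0 := by
  set S := {y : Rd d | r < ‖y‖ ∧ ‖y‖ ≤ s}
  have hS : MeasurableSet S :=
    (measurableSet_lt measurable_const measurable_norm).inter
      (measurableSet_le measurable_norm measurable_const)
  have hr2 : 0 < min (r ^ 2) 1 := by positivity
  -- On the shell, `‖y‖` is dominated by a multiple of the integrable `min (‖y‖ ^ 2) 1`.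
  have hid : IntegrableOn (fun y : Rd d => y) S ν := by
    refine ((integrable_min_norm_sq_one hν2).const_mul (s / min (r ^ 2) 1)).integrableOn.mono'
      (by fun_prop) ((ae_restrict_iff' hS).2 (ae_of_all _ fun y hy => ?_))
    have hm : min (r ^ 2) 1 ≤ min (‖y‖ ^ 2) 1 :=
      min_le_min_right _ (pow_le_pow_left₀ hr.le hy.1.le 2)
    rw [div_mul_eq_mul_div, le_div_iff₀ hr2]
    exact mul_le_mul hy.2 hm hr2.le ((norm_nonneg y).trans hy.2)
  refine ⟨(integrable_indicator_iff hS).2 ((hid.const_inner ξ).const_mul (2 * π)), ?_⟩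
  rw [integral_indicator hS, integral_const_mul, integral_inner hid, hsym, inner_zero_right,
    mul_zero]

lemma integrable_sinSubTrunc_and_integral_eq {r s : ℝ}
    (hν2 : ∫⁻ y, ENNReal.ofReal (min (‖y‖ ^ 2) 1) ∂ν < ∞)
    (hsym : ∀ a b : ℝ, 0 < a → a < b → ∫ y in {y : Rd d | a < ‖y‖ ∧ ‖y‖ ≤ b}, y ∂ν = 0)
    (hr : 0 < r) (hs : 0 < s) (h : Integrable (sinSubTrunc ξ s) ν) :
    Integrable (sinSubTrunc ξ r) ν ∧ ∫ y, sinSubTrunc ξ r y ∂ν = ∫ y, sinSubTrunc ξ s y ∂ν := by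
  rcases lt_trichotomy r s with hrs | rfl | hsr
  · obtain ⟨hi, hz⟩ := integrable_and_integral_indicator_shell_eq_zero hν2 (hsym r s hr hrs) hr ξ
    have heq : sinSubTrunc ξ r = sinSubTrunc ξ s
        + {y : Rd d | r < ‖y‖ ∧ ‖y‖ ≤ s}.indicator fun y => 2 * π * ⟪ξ, y⟫ :=
      funext fun y => eq_add_of_sub_eq' (sinSubTrunc_sub_sinSubTrunc hrs.le y)
    rw [heq]
    exact ⟨h.add hi, by rw [integral_add' h hi, hz, add_zero]⟩
  · exact ⟨h, rfl⟩
  · obtain ⟨hi, hz⟩ := integrable_and_integral_indicator_shell_eq_zero hν2 (hsym s r hs hsr) hs ξ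
    have heq : sinSubTrunc ξ r = sinSubTrunc ξ s
        - {y : Rd d | s < ‖y‖ ∧ ‖y‖ ≤ r}.indicator fun y => 2 * π * ⟪ξ, y⟫ :=
      funext fun y => by
        rw [Pi.sub_apply, ← sinSubTrunc_sub_sinSubTrunc hsr.le y, sub_sub_cancel]
    rw [heq]
    exact ⟨h.sub hi, by rw [integral_sub' h hi, hz, sub_zero]⟩

lemma integrable_levyIntegrand_and_im_symb_le_of_eq_one
    (hν2 : ∫⁻ y, ENNReal.ofReal (min (‖y‖ ^ 2) 1) ∂ν < ∞)
    (hsym : ∀ a b : ℝ, 0 < a → a < b → ∫ y in {y : Rd d | a < ‖y‖ ∧ ‖y‖ ≤ b}, y ∂ν = 0)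
    (hR : 0 < R) (hξR : 2 * ‖ξ‖ * R ≤ 1) (hκ : ENNReal.ofReal (κ R) ≠ 0)
    (hN : ∫⁻ y, ENNReal.ofReal (min (‖y‖ ^ 2) 1) ∂scaledM κ ν R ≤ ENNReal.ofReal N) :
    Integrable (levyIntegrand 1 ξ) ν ∧
      ENNReal.ofReal (κ R) * ENNReal.ofReal |(symb 1 ν ξ).im|
        ≤ ENNReal.ofReal (π ^ 2) * ENNReal.ofReal N := by
  have him : (fun y => (levyIntegrand 1 ξ y).im) = sinSubTrunc ξ 1 := by
    ext y
    by_cases hy : ‖y‖ ≤ 1 <;> simp [sinSubTrunc, chiSigma, hy]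
  have hw : Measurable fun y : Rd d => ENNReal.ofReal (min (‖y‖ ^ 2) 1) := by fun_prop
  have hbound (y : Rd d) : |sinSubTrunc ξ R y| ≤ π ^ 2 * min (‖R⁻¹ • y‖ ^ 2) 1 := by
    have h := abs_sin_sub_ite_le (abs_two_pi_inner_le hR hξR y)
    simpa only [sinSubTrunc, Set.indicator_apply, Set.mem_ofPred_eq,
      norm_inv_smul_le_one_iff hR] using h
  have hmeas : AEStronglyMeasurable (sinSubTrunc ξ R) ν :=
    ((by fun_prop : Measurable fun y : Rd d => sin (2 * π * ⟪ξ, y⟫)).sub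
      ((by fun_prop : Measurable fun y : Rd d => 2 * π * ⟪ξ, y⟫).indicator
        (measurableSet_le (by fun_prop) (by fun_prop)))).aestronglyMeasurable
  obtain ⟨hint1, heq⟩ := integrable_sinSubTrunc_and_integral_eq hν2 hsym one_pos hR
    (integrable_of_abs_le_scaled hmeas hw (by positivity) hbound hκ hN)
  have hint : Integrable (levyIntegrand 1 ξ) ν := integrable_levyIntegrand hν2 (him ▸ hint1)
  refine ⟨hint, ?_⟩
  rw [symb_im hint, him, heq]
  exact ofReal_mul_abs_integral_le_of_abs_le_scaled hw (by positivity) hbound hN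

end CriticalCase

section Comparison

lemma le_div_mul_of_ofReal_bounds {x y a m M : ℝ} (hm : 0 < m)
    (hx : ENNReal.ofReal m ≤ ENNReal.ofReal a * ENNReal.ofReal x)
    (hy : ENNReal.ofReal a * ENNReal.ofReal y ≤ ENNReal.ofReal M) :
    y ≤ max M 0 / m * x := by
  have hpos : 0 < ENNReal.ofReal a * ENNReal.ofReal x := (ENNReal.ofReal_pos.2 hm).trans_le hx
  obtain ⟨ha, hx0⟩ : 0 < a ∧ 0 < x := by
    simpa only [CanonicallyOrderedAdd.mul_pos, ENNReal.ofReal_pos] using hpos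
  rw [← ENNReal.ofReal_mul ha.le] at hx hy
  have hx' : m ≤ a * x := (ENNReal.ofReal_le_ofReal_iff (by positivity)).1 hx
  rcases le_or_gt y 0 with hy0 | hy0
  · exact hy0.trans (by positivity)
  have hy' : a * y ≤ max M 0 := (ENNReal.ofReal_le_ofReal_iff (le_max_right _ _)).1
    (hy.trans (ENNReal.ofReal_le_ofReal (le_max_left _ _)))
  rw [div_mul_eq_mul_div, le_div_iff₀ hm]
  nlinarith

lemma exists_forall_comparable {E : Type*} {ψ : E → ℂ} {K : ℝ}
    (h : ∀ ξ, |(ψ ξ).im| ≤ K * |(ψ ξ).re|) :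
    ∃ c : ℝ, 0 < c ∧ ∀ ξ, c * ‖ψ ξ‖ ≤ |(ψ ξ).re| ∧ |(ψ ξ).re| ≤ ‖ψ ξ‖ ∧
      |(ψ ξ).im| ≤ c⁻¹ * |(ψ ξ).re| := by
  refine ⟨(1 + max K 0)⁻¹, by positivity, fun ξ => ?_⟩
  have him : |(ψ ξ).im| ≤ max K 0 * |(ψ ξ).re| :=
    (h ξ).trans (by gcongr; exact le_max_left _ _)
  have hnorm : ‖ψ ξ‖ ≤ (1 + max K 0) * |(ψ ξ).re| :=
    (Complex.norm_le_abs_re_add_abs_im _).trans (by linarith)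
  refine ⟨?_, Complex.abs_re_le_norm _, ?_⟩
  · rwa [inv_mul_le_iff₀ (by positivity)]
  · rw [inv_inv]
    nlinarith [abs_nonneg (ψ ξ).re]

end Comparison

theorem statement_11_general (d : ℕ) (σ : ℝ)
    (ν : Measure (Rd d)) (hν : MemA σ ν)
    (κ : ℝ → ℝ) (N2 n1 : ℝ) (hn1 : 0 < n1)
    (h1 : σ < 1 → ∀ R > 0,
      (∫⁻ y, ENNReal.ofReal (min ‖y‖ 1) ∂scaledM κ ν R) ≤ ENNReal.ofReal N2)
    (h2 : σ = 1 → ∀ R > 0,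
      (∫⁻ y, ENNReal.ofReal (min (‖y‖ ^ 2) 1) ∂scaledM κ ν R) ≤ ENNReal.ofReal N2)
    (h3 : 1 < σ → ∀ R > 0,
      (∫⁻ y in {y : Rd d | ‖y‖ ≤ 1}, ENNReal.ofReal (‖y‖ ^ 2) ∂scaledM κ ν R)
        + (∫⁻ y in {y : Rd d | 1 < ‖y‖}, ENNReal.ofReal ‖y‖ ∂scaledM κ ν R)
        ≤ ENNReal.ofReal N2)
    (hlow : ∀ R > 0, ∀ ξ : Rd d, ‖ξ‖ = 1 →
      ENNReal.ofReal n1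
        ≤ ∫⁻ y in {y : Rd d | ‖y‖ ≤ 1}, ENNReal.ofReal (⟪ξ, y⟫ ^ 2) ∂scaledM κ ν R) :
    ∃ c : ℝ, 0 < c ∧ ∀ ξ : Rd d,
      c * ‖symb σ ν ξ‖ ≤ |(symb σ ν ξ).re| ∧
      |(symb σ ν ξ).re| ≤ ‖symb σ ν ξ‖ ∧
      |(symb σ ν ξ).im| ≤ c⁻¹ * |(symb σ ν ξ).re| := by
  obtain ⟨-, hν2, -, -, hsym⟩ := hν
  refine exists_forall_comparable (K := max (π ^ 2 * N2) 0 / n1) fun ξ => ?_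
  rcases eq_or_ne ξ 0 with rfl | hξ
  · simp [symb_zero]
  set R := (2 * ‖ξ‖)⁻¹
  have hR : 0 < R := by positivity
  have hξR : 2 * ‖ξ‖ * R = 1 := mul_inv_cancel₀ (by positivity)
  have hre : ENNReal.ofReal n1
      ≤ ENNReal.ofReal (κ R) * ∫⁻ y, ENNReal.ofReal (1 - cos (2 * π * ⟪ξ, y⟫)) ∂ν :=
    (hlow R hR _ (norm_smul_inv_norm hξ)).trans (setLIntegral_inner_sq_scaledM_le hξR)
  have hκ : ENNReal.ofReal (κ R) ≠ 0 := fun h => by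
    rw [h, zero_mul, nonpos_iff_eq_zero, ENNReal.ofReal_eq_zero] at hre
    linarith
  obtain ⟨hint, him⟩ : Integrable (levyIntegrand σ ξ) ν ∧
      ENNReal.ofReal (κ R) * ENNReal.ofReal |(symb σ ν ξ).im|
        ≤ ENNReal.ofReal (π ^ 2) * ENNReal.ofReal N2 := by
    rcases lt_trichotomy σ 1 with hσ | rfl | hσ
    · exact integrable_levyIntegrand_and_im_symb_le_of_lt_one hσ hν2 hR hξR.le hκ (h1 hσ R hR)
    · exact integrable_levyIntegrand_and_im_symb_le_of_eq_one hν2 (hsym rfl) hR hξR.le hκ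
        (h2 rfl R hR)
    · exact integrable_levyIntegrand_and_im_symb_le_of_one_lt hσ hν2 hR hξR.le hκ (h3 hσ R hR)
  rw [← ofReal_abs_symb_re hint] at hre
  rw [← ENNReal.ofReal_mul (sq_nonneg π)] at him
  exact le_div_mul_of_ofReal_bounds hn1 hre him

/-- comparability of `ψ^π`, its real part and its imaginary part. -/
theorem statement_11 (d : ℕ) (σ : ℝ) (hσ : σ ∈ Set.Ioo (0:ℝ) 2)
    (ν : Measure (Rd d)) (hν : MemA σ ν)
    (κ l : ℝ → ℝ) (hκ : ScalingPair κ l) (N2 n1 : ℝ) (hn1 : 0 < n1)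
    (h1 : σ < 1 → ∀ R > 0,
      (∫⁻ y, ENNReal.ofReal (min ‖y‖ 1) ∂scaledM κ ν R) ≤ ENNReal.ofReal N2)
    (h2 : σ = 1 → ∀ R > 0,
      (∫⁻ y, ENNReal.ofReal (min (‖y‖ ^ 2) 1) ∂scaledM κ ν R) ≤ ENNReal.ofReal N2)
    (h3 : 1 < σ → ∀ R > 0,
      (∫⁻ y in {y : Rd d | ‖y‖ ≤ 1}, ENNReal.ofReal (‖y‖ ^ 2) ∂scaledM κ ν R)
        + (∫⁻ y in {y : Rd d | 1 < ‖y‖}, ENNReal.ofReal ‖y‖ ∂scaledM κ ν R)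
        ≤ ENNReal.ofReal N2)
    (hlow : ∀ R > 0, ∀ ξ : Rd d, ‖ξ‖ = 1 →
      ENNReal.ofReal n1
        ≤ ∫⁻ y in {y : Rd d | ‖y‖ ≤ 1}, ENNReal.ofReal (⟪ξ, y⟫ ^ 2) ∂scaledM κ ν R) :
    ∃ c : ℝ, 0 < c ∧ ∀ ξ : Rd d,
      c * ‖symb σ ν ξ‖ ≤ |(symb σ ν ξ).re| ∧
      |(symb σ ν ξ).re| ≤ ‖symb σ ν ξ‖ ∧
      |(symb σ ν ξ).im| ≤ c⁻¹ * |(symb σ ν ξ).re| :=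
  statement_11_general d σ ν hν κ N2 n1 hn1 h1 h2 h3 hlow
end
end
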